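/- Skew Cauchy identity for horizontal strips: for any partitions μ and λ, ∑_{ν : ν ⪯ μ and ν ⪯ λ} x^{|μ|-|ν|} y^{|λ|-|ν|} = (1 - xy) · ∑_{κ : μ ⪯ κ and λ ⪯ κ} x^{|κ|-|λ|} y^{|κ|-|μ|}, as an identity of formal power series in x and y. -/

import Mathlib

/-- An integer partition: a weakly decreasing, eventually-zero sequence of
nonnegative integers (0-indexed: `part i` is the (i+1)-st part). -/
structure SeqPartition where
  part : ℕ → ℕ
  antitone : ∀ ⦃i j : ℕ⦄, i ≤ j → part j ≤ part i
  eventually_zero : ∃ N, ∀ i, N ≤ i → part i = 0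

/-- The conjugate partition: `conj j` = number of parts strictly larger than `j`,
i.e. the length of the (j+1)-st column (1-indexed λ'_{j+1}). -/
noncomputable def SeqPartition.conj (P : SeqPartition) (j : ℕ) : ℕ :=
  Nat.card {i : ℕ // j < P.part i}

/-- The size |λ| of a partition. -/
noncomputable def SeqPartition.size (P : SeqPartition) : ℕ := ∑ᶠ i, P.part i

/-- μ ⪯ λ : the interlacing relation λ₁ ≥ μ₁ ≥ λ₂ ≥ μ₂ ≥ ... -/
def Interlace (μ lam : SeqPartition) : Prop :=
  ∀ i, μ.part i ≤ lam.part i ∧ lam.part (i + 1) ≤ μ.part i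

/-- Hook length of the (0-indexed) cell (i,j), valid when `j < P.part i`:
arm + leg + 1 = (λ_i - j - 1) + (λ'_j - i - 1) + 1. -/
noncomputable def SeqPartition.hook (P : SeqPartition) (i j : ℕ) : ℕ :=
  (P.part i - j) + (P.conj j - i) - 1


/-- The series ∑_{ν ⪯ μ, ν ⪯ λ} x^{|μ|-|ν|} y^{|λ|-|ν|}, with x = X 0, y = X 1. -/
noncomputable def skewCauchyLHS (μ lam : SeqPartition) : MvPowerSeries (Fin 2) ℚ :=
  fun d => (Nat.card {ν : SeqPartition // Interlace ν μ ∧ Interlace ν lam ∧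
    ν.size + d 0 = μ.size ∧ ν.size + d 1 = lam.size} : ℚ)

/-- The series ∑_{κ ⪰ μ, κ ⪰ λ} x^{|κ|-|λ|} y^{|κ|-|μ|}, with x = X 0, y = X 1. -/
noncomputable def skewCauchyRHS (μ lam : SeqPartition) : MvPowerSeries (Fin 2) ℚ :=
  fun d => (Nat.card {κ : SeqPartition // Interlace μ κ ∧ Interlace lam κ ∧
    κ.size = lam.size + d 0 ∧ κ.size = μ.size + d 1} : ℚ)


namespace SC

lemma SeqPartition.ext' {P Q : SeqPartition} (h : ∀ i, P.part i = Q.part i) : P = Q := by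
  cases P; cases Q
  simp only [SeqPartition.mk.injEq]
  exact funext h

lemma size_eq_sum (P : SeqPartition) {N : ℕ} (h : ∀ i, N ≤ i → P.part i = 0) :
    P.size = ∑ i ∈ Finset.range N, P.part i := by
  apply finsum_eq_sum_of_support_subset
  intro i hi
  simp only [Function.mem_support] at hi
  simp only [Finset.coe_range, Set.mem_Iio]
  by_contra h'
  exact hi (h i (le_of_not_gt h'))

lemma sum_range_le (P : SeqPartition) (M : ℕ) :
    ∑ i ∈ Finset.range M, P.part i ≤ P.size := by
  obtain ⟨N, hN⟩ := P.eventually_zero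
  rw [size_eq_sum P (N := max M N) (fun i hi => hN i (le_trans (le_max_right _ _) hi))]
  exact Finset.sum_le_sum_of_subset (Finset.range_subset_range.mpr (le_max_left _ _))

lemma part_le_size (P : SeqPartition) (i : ℕ) : P.part i ≤ P.size :=
  le_trans (Finset.single_le_sum (f := P.part) (fun _ _ => Nat.zero_le _)
    (Finset.self_mem_range_succ i)) (sum_range_le P (i + 1))

lemma part_eq_zero_of_size_le (P : SeqPartition) {i : ℕ} (h : P.size ≤ i) : P.part i = 0 := by
  by_contra h0
  have h1 : ∀ j ∈ Finset.range (i + 1), 1 ≤ P.part j := by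
    intro j hj
    have := P.antitone (Nat.le_of_lt_succ (Finset.mem_range.mp hj))
    omega
  have h2 := Finset.sum_le_sum h1
  simp only [Finset.sum_const, Finset.card_range, smul_eq_mul, mul_one] at h2
  have := sum_range_le P (i + 1)
  omega

lemma finite_of_size {p : SeqPartition → Prop} (n : ℕ) (h : ∀ P, p P → P.size = n) :
    Finite {P : SeqPartition // p P} := by
  apply Finite.of_injective (f := fun P : {P : SeqPartition // p P} =>
    (fun i : Fin n => (⟨P.1.part i, by
      have := part_le_size P.1 i
      have := h P.1 P.2
      omega⟩ : Fin (n + 1))))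
  intro P Q hPQ
  ext1
  apply SeqPartition.ext'
  intro i
  by_cases hi : i < n
  · have := congrFun hPQ ⟨i, hi⟩
    simpa using this
  · have h1 : P.1.part i = 0 := part_eq_zero_of_size_le _ (by rw [h P.1 P.2]; omega)
    have h2 : Q.1.part i = 0 := part_eq_zero_of_size_le _ (by rw [h Q.1 Q.2]; omega)
    rw [h1, h2]

lemma sum_shift (f : ℕ → ℕ) (N : ℕ) (hN : f N = 0) :
    (∑ i ∈ Finset.range N, f (i + 1)) + f 0 = ∑ i ∈ Finset.range N, f i := by
  rw [← Finset.sum_range_succ', Finset.sum_range_succ, hN, add_zero]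

end SC

namespace SC

variable (μ lam : SeqPartition)

noncomputable def upFun (ν : SeqPartition) : ℕ → ℕ
  | 0 => max (μ.part 0) (lam.part 0)
  | (i + 1) => max (μ.part (i + 1)) (lam.part (i + 1)) +
      (min (μ.part i) (lam.part i) - ν.part i)

noncomputable def upPart (ν : SeqPartition) (h1 : Interlace ν μ) (h2 : Interlace ν lam) :
    SeqPartition where
  part := upFun μ lam ν
  antitone := antitone_nat_of_succ_le (by
    intro n
    cases n with
    | zero =>
      have a := h1 0; have b := h2 0
      simp only [upFun]; omega
    | succ j =>
      have a := h1 (j + 1); have b := h2 (j + 1)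
      simp only [upFun]; omega)
  eventually_zero := by
    obtain ⟨N0, hμ⟩ := μ.eventually_zero
    obtain ⟨N1, hl⟩ := lam.eventually_zero
    refine ⟨N0 + N1 + 1, fun i hi => ?_⟩
    obtain ⟨j, rfl⟩ : ∃ j, i = j + 1 := ⟨i - 1, by omega⟩
    have a := hμ (j + 1) (by omega); have b := hl (j + 1) (by omega)
    have c := hμ j (by omega); have d := hl j (by omega)
    simp only [upFun]; omega

noncomputable def downPart (κ : SeqPartition) (hμκ : Interlace μ κ) (hlk : Interlace lam κ) :
    SeqPartition where
  part := fun i => max (μ.part (i + 1)) (lam.part (i + 1)) +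
      (min (μ.part i) (lam.part i) - κ.part (i + 1))
  antitone := antitone_nat_of_succ_le (by
    intro n
    have a1 := (hμκ n).2; have a2 := (hlk n).2
    have b1 := (hμκ (n + 1)).1; have b2 := (hlk (n + 1)).1
    have c1 := (hμκ (n + 1)).2; have c2 := (hlk (n + 1)).2
    have d1 : μ.part (n + 1 + 1) ≤ κ.part (n + 1 + 1) := (hμκ (n + 2)).1
    have d2 : lam.part (n + 1 + 1) ≤ κ.part (n + 1 + 1) := (hlk (n + 2)).1
    omega)
  eventually_zero := by
    obtain ⟨N0, hμ⟩ := μ.eventually_zero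
    obtain ⟨N1, hl⟩ := lam.eventually_zero
    refine ⟨N0 + N1, fun i hi => ?_⟩
    have a := hμ (i + 1) (by omega); have b := hl (i + 1) (by omega)
    have c := hμ i (by omega); have d := hl i (by omega)
    show max (μ.part (i + 1)) (lam.part (i + 1)) +
      (min (μ.part i) (lam.part i) - κ.part (i + 1)) = 0
    omega

noncomputable def shiftPart (κ : SeqPartition) : SeqPartition where
  part := fun i => if i = 0 then κ.part 0 + 1 else κ.part i
  antitone := antitone_nat_of_succ_le (by
    intro n
    cases n with
    | zero => have := κ.antitone (show 0 ≤ 1 by omega); simp; omega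
    | succ j => have := κ.antitone (show j + 1 ≤ j + 1 + 1 by omega); simp; omega)
  eventually_zero := by
    obtain ⟨N, hN⟩ := κ.eventually_zero
    exact ⟨N + 1, fun i hi => by
      have := hN i (by omega)
      simp only [show i ≠ 0 by omega, if_false]
      exact this⟩

noncomputable def unshiftPart (κ : SeqPartition) (h : κ.part 1 < κ.part 0) : SeqPartition where
  part := fun i => if i = 0 then κ.part 0 - 1 else κ.part i
  antitone := antitone_nat_of_succ_le (by
    intro n
    cases n with
    | zero => simp; omega
    | succ j => have := κ.antitone (show j + 1 ≤ j + 1 + 1 by omega); simp; omega)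
  eventually_zero := by
    obtain ⟨N, hN⟩ := κ.eventually_zero
    exact ⟨N + 1, fun i hi => by
      have := hN i (by omega)
      simp only [show i ≠ 0 by omega, if_false]
      exact this⟩

end SC

namespace SC

variable (μ lam : SeqPartition)

lemma up_size (ν : SeqPartition) (h1 : Interlace ν μ) (h2 : Interlace ν lam) :
    (upPart μ lam ν h1 h2).size + ν.size = μ.size + lam.size := by
  obtain ⟨N0, hm⟩ := μ.eventually_zero
  obtain ⟨N1, hl⟩ := lam.eventually_zero
  set N := N0 + N1 with hN
  have hμ0 : ∀ i, N ≤ i → μ.part i = 0 := fun i hi => hm i (by omega)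
  have hl0 : ∀ i, N ≤ i → lam.part i = 0 := fun i hi => hl i (by omega)
  have hν0 : ∀ i, N ≤ i → ν.part i = 0 := fun i hi => by
    have := (h1 i).1; have := hμ0 i hi; omega
  have hup0 : ∀ i, N + 1 ≤ i → (upPart μ lam ν h1 h2).part i = 0 := by
    intro i hi
    obtain ⟨j, rfl⟩ : ∃ j, i = j + 1 := ⟨i - 1, by omega⟩
    show upFun μ lam ν (j + 1) = 0
    have a := hμ0 (j + 1) (by omega); have b := hl0 (j + 1) (by omega)
    have c := hμ0 j (by omega); have d := hl0 j (by omega)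
    have e := hν0 j (by omega)
    simp only [upFun]; omega
  rw [size_eq_sum _ hup0, size_eq_sum ν hν0,
      size_eq_sum μ (N := N + 1) (fun i hi => hμ0 i (by omega)),
      size_eq_sum lam (N := N + 1) (fun i hi => hl0 i (by omega)),
      Finset.sum_range_succ' (fun i => (upPart μ lam ν h1 h2).part i) N,
      Finset.sum_range_succ' (fun i => μ.part i) N,
      Finset.sum_range_succ' (fun i => lam.part i) N]
  have hA : (∑ i ∈ Finset.range N, (upPart μ lam ν h1 h2).part (i + 1)) +
      (∑ i ∈ Finset.range N, ν.part i) +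
      (∑ i ∈ Finset.range N, min (μ.part (i + 1)) (lam.part (i + 1))) =
      (∑ i ∈ Finset.range N, μ.part (i + 1)) +
      (∑ i ∈ Finset.range N, lam.part (i + 1)) +
      (∑ i ∈ Finset.range N, min (μ.part i) (lam.part i)) := by
    rw [← Finset.sum_add_distrib, ← Finset.sum_add_distrib,
        ← Finset.sum_add_distrib, ← Finset.sum_add_distrib]
    refine Finset.sum_congr rfl (fun i _ => ?_)
    have a := h1 i; have b := h2 i
    show upFun μ lam ν (i + 1) + _ + _ = _
    simp only [upFun]; omega
  have hB : (∑ i ∈ Finset.range N, min (μ.part (i + 1)) (lam.part (i + 1))) +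
      min (μ.part 0) (lam.part 0) = ∑ i ∈ Finset.range N, min (μ.part i) (lam.part i) := by
    have := sum_shift (fun i => min (μ.part i) (lam.part i)) N (by
      show min (μ.part N) (lam.part N) = 0
      have := hμ0 N (le_refl N); omega)
    exact this
  have hup00 : (upPart μ lam ν h1 h2).part 0 = max (μ.part 0) (lam.part 0) := rfl
  omega

lemma down_size (κ : SeqPartition) (hμκ : Interlace μ κ) (hlk : Interlace lam κ)
    (h0 : κ.part 0 = max (μ.part 0) (lam.part 0)) :
    (downPart μ lam κ hμκ hlk).size + κ.size = μ.size + lam.size := by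
  obtain ⟨N0, hm⟩ := μ.eventually_zero
  obtain ⟨N1, hl⟩ := lam.eventually_zero
  obtain ⟨N2, hk⟩ := κ.eventually_zero
  set N := N0 + N1 + N2 with hN
  have hμ0 : ∀ i, N ≤ i → μ.part i = 0 := fun i hi => hm i (by omega)
  have hl0 : ∀ i, N ≤ i → lam.part i = 0 := fun i hi => hl i (by omega)
  have hκ0 : ∀ i, N ≤ i → κ.part i = 0 := fun i hi => hk i (by omega)
  have hdn0 : ∀ i, N ≤ i → (downPart μ lam κ hμκ hlk).part i = 0 := by
    intro i hi
    show max (μ.part (i + 1)) (lam.part (i + 1)) +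
      (min (μ.part i) (lam.part i) - κ.part (i + 1)) = 0
    have a := hμ0 (i + 1) (by omega); have b := hl0 (i + 1) (by omega)
    have c := hμ0 i (by omega); have d := hl0 i (by omega)
    omega
  rw [size_eq_sum _ hdn0, size_eq_sum κ (N := N + 1) (fun i hi => hκ0 i (by omega)),
      size_eq_sum μ (N := N + 1) (fun i hi => hμ0 i (by omega)),
      size_eq_sum lam (N := N + 1) (fun i hi => hl0 i (by omega)),
      Finset.sum_range_succ' (fun i => κ.part i) N,
      Finset.sum_range_succ' (fun i => μ.part i) N,
      Finset.sum_range_succ' (fun i => lam.part i) N]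
  have hA : (∑ i ∈ Finset.range N, (downPart μ lam κ hμκ hlk).part i) +
      (∑ i ∈ Finset.range N, κ.part (i + 1)) +
      (∑ i ∈ Finset.range N, min (μ.part (i + 1)) (lam.part (i + 1))) =
      (∑ i ∈ Finset.range N, μ.part (i + 1)) +
      (∑ i ∈ Finset.range N, lam.part (i + 1)) +
      (∑ i ∈ Finset.range N, min (μ.part i) (lam.part i)) := by
    rw [← Finset.sum_add_distrib, ← Finset.sum_add_distrib,
        ← Finset.sum_add_distrib, ← Finset.sum_add_distrib]
    refine Finset.sum_congr rfl (fun i _ => ?_)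
    have a1 := (hμκ i).2; have a2 := (hlk i).2
    have b1 := (hμκ (i + 1)).1; have b2 := (hlk (i + 1)).1
    show max (μ.part (i + 1)) (lam.part (i + 1)) +
      (min (μ.part i) (lam.part i) - κ.part (i + 1)) + _ + _ = _
    omega
  have hB : (∑ i ∈ Finset.range N, min (μ.part (i + 1)) (lam.part (i + 1))) +
      min (μ.part 0) (lam.part 0) = ∑ i ∈ Finset.range N, min (μ.part i) (lam.part i) := by
    exact sum_shift (fun i => min (μ.part i) (lam.part i)) N (by
      show min (μ.part N) (lam.part N) = 0
      have := hμ0 N (le_refl N); omega)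
  omega

lemma shift_size (κ : SeqPartition) : (shiftPart κ).size = κ.size + 1 := by
  obtain ⟨N, hN⟩ := κ.eventually_zero
  have hκ0 : ∀ i, N + 1 ≤ i → κ.part i = 0 := fun i hi => hN i (by omega)
  have hs0 : ∀ i, N + 1 ≤ i → (shiftPart κ).part i = 0 := by
    intro i hi
    show (if i = 0 then κ.part 0 + 1 else κ.part i) = 0
    rw [if_neg (by omega)]
    exact hκ0 i hi
  rw [size_eq_sum _ hs0, size_eq_sum κ hκ0,
      Finset.sum_range_succ' (fun i => (shiftPart κ).part i) N,
      Finset.sum_range_succ' (fun i => κ.part i) N]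
  have h1 : ∀ i ∈ Finset.range N, (shiftPart κ).part (i + 1) = κ.part (i + 1) := by
    intro i _
    show (if i + 1 = 0 then κ.part 0 + 1 else κ.part (i + 1)) = κ.part (i + 1)
    rw [if_neg (by omega)]
  rw [Finset.sum_congr rfl h1]
  have h2 : (shiftPart κ).part 0 = κ.part 0 + 1 := rfl
  omega

lemma unshift_size (κ : SeqPartition) (h : κ.part 1 < κ.part 0) :
    (unshiftPart κ h).size + 1 = κ.size := by
  obtain ⟨N, hN⟩ := κ.eventually_zero
  have hκ0 : ∀ i, N + 1 ≤ i → κ.part i = 0 := fun i hi => hN i (by omega)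
  have hs0 : ∀ i, N + 1 ≤ i → (unshiftPart κ h).part i = 0 := by
    intro i hi
    show (if i = 0 then κ.part 0 - 1 else κ.part i) = 0
    rw [if_neg (by omega)]
    exact hκ0 i hi
  rw [size_eq_sum _ hs0, size_eq_sum κ hκ0,
      Finset.sum_range_succ' (fun i => (unshiftPart κ h).part i) N,
      Finset.sum_range_succ' (fun i => κ.part i) N]
  have h1 : ∀ i ∈ Finset.range N, (unshiftPart κ h).part (i + 1) = κ.part (i + 1) := by
    intro i _
    show (if i + 1 = 0 then κ.part 0 - 1 else κ.part (i + 1)) = κ.part (i + 1)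
    rw [if_neg (by omega)]
  rw [Finset.sum_congr rfl h1]
  have h2 : (unshiftPart κ h).part 0 = κ.part 0 - 1 := rfl
  omega

end SC

namespace SC

variable (μ lam : SeqPartition)

lemma up_inter_left (ν : SeqPartition) (h1 : Interlace ν μ) (h2 : Interlace ν lam) :
    Interlace μ (upPart μ lam ν h1 h2) := by
  intro i
  cases i with
  | zero =>
    constructor
    · show μ.part 0 ≤ upFun μ lam ν 0
      simp only [upFun]; omega
    · show upFun μ lam ν 1 ≤ μ.part 0
      have a := h1 0; have b := h2 0
      simp only [upFun]; omega
  | succ j =>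
    constructor
    · show μ.part (j + 1) ≤ upFun μ lam ν (j + 1)
      simp only [upFun]; omega
    · show upFun μ lam ν (j + 1 + 1) ≤ μ.part (j + 1)
      have a := h1 (j + 1); have b := h2 (j + 1)
      simp only [upFun]; omega

lemma up_inter_right (ν : SeqPartition) (h1 : Interlace ν μ) (h2 : Interlace ν lam) :
    Interlace lam (upPart μ lam ν h1 h2) := by
  intro i
  cases i with
  | zero =>
    constructor
    · show lam.part 0 ≤ upFun μ lam ν 0
      simp only [upFun]; omega
    · show upFun μ lam ν 1 ≤ lam.part 0
      have a := h1 0; have b := h2 0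
      simp only [upFun]; omega
  | succ j =>
    constructor
    · show lam.part (j + 1) ≤ upFun μ lam ν (j + 1)
      simp only [upFun]; omega
    · show upFun μ lam ν (j + 1 + 1) ≤ lam.part (j + 1)
      have a := h1 (j + 1); have b := h2 (j + 1)
      simp only [upFun]; omega

lemma down_inter_left (κ : SeqPartition) (hμκ : Interlace μ κ) (hlk : Interlace lam κ) :
    Interlace (downPart μ lam κ hμκ hlk) μ := by
  intro i
  have a1 := (hμκ i).2; have a2 := (hlk i).2
  have b1 := (hμκ (i + 1)).1; have b2 := (hlk (i + 1)).1
  constructor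
  · show max (μ.part (i + 1)) (lam.part (i + 1)) +
      (min (μ.part i) (lam.part i) - κ.part (i + 1)) ≤ μ.part i
    omega
  · show μ.part (i + 1) ≤ max (μ.part (i + 1)) (lam.part (i + 1)) +
      (min (μ.part i) (lam.part i) - κ.part (i + 1))
    omega

lemma down_inter_right (κ : SeqPartition) (hμκ : Interlace μ κ) (hlk : Interlace lam κ) :
    Interlace (downPart μ lam κ hμκ hlk) lam := by
  intro i
  have a1 := (hμκ i).2; have a2 := (hlk i).2
  have b1 := (hμκ (i + 1)).1; have b2 := (hlk (i + 1)).1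
  constructor
  · show max (μ.part (i + 1)) (lam.part (i + 1)) +
      (min (μ.part i) (lam.part i) - κ.part (i + 1)) ≤ lam.part i
    omega
  · show lam.part (i + 1) ≤ max (μ.part (i + 1)) (lam.part (i + 1)) +
      (min (μ.part i) (lam.part i) - κ.part (i + 1))
    omega

lemma shift_inter (τ κ : SeqPartition) (h : Interlace τ κ) : Interlace τ (shiftPart κ) := by
  intro i
  have a := h i
  cases i with
  | zero =>
    constructor
    · show τ.part 0 ≤ κ.part 0 + 1
      omega
    · show (if 0 + 1 = 0 then κ.part 0 + 1 else κ.part (0 + 1)) ≤ τ.part 0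
      rw [if_neg (by omega)]
      exact a.2
  | succ j =>
    constructor
    · show τ.part (j + 1) ≤ (if j + 1 = 0 then κ.part 0 + 1 else κ.part (j + 1))
      rw [if_neg (by omega)]
      exact a.1
    · show (if j + 1 + 1 = 0 then κ.part 0 + 1 else κ.part (j + 1 + 1)) ≤ τ.part (j + 1)
      rw [if_neg (by omega)]
      exact a.2

lemma unshift_inter (τ κ : SeqPartition) (h : Interlace τ κ) (hlt : κ.part 1 < κ.part 0)
    (h0 : τ.part 0 < κ.part 0) : Interlace τ (unshiftPart κ hlt) := by
  intro i
  have a := h i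
  cases i with
  | zero =>
    constructor
    · show τ.part 0 ≤ κ.part 0 - 1
      omega
    · show (if 0 + 1 = 0 then κ.part 0 - 1 else κ.part (0 + 1)) ≤ τ.part 0
      rw [if_neg (by omega)]
      exact a.2
  | succ j =>
    constructor
    · show τ.part (j + 1) ≤ (if j + 1 = 0 then κ.part 0 - 1 else κ.part (j + 1))
      rw [if_neg (by omega)]
      exact a.1
    · show (if j + 1 + 1 = 0 then κ.part 0 - 1 else κ.part (j + 1 + 1)) ≤ τ.part (j + 1)
      rw [if_neg (by omega)]
      exact a.2

lemma down_up (ν : SeqPartition) (h1 : Interlace ν μ) (h2 : Interlace ν lam)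
    (ha : Interlace μ (upPart μ lam ν h1 h2)) (hb : Interlace lam (upPart μ lam ν h1 h2)) :
    downPart μ lam (upPart μ lam ν h1 h2) ha hb = ν := by
  apply SeqPartition.ext'
  intro i
  have a := h1 i; have b := h2 i
  show max (μ.part (i + 1)) (lam.part (i + 1)) +
    (min (μ.part i) (lam.part i) - upFun μ lam ν (i + 1)) = ν.part i
  simp only [upFun]; omega

lemma up_down (κ : SeqPartition) (hμκ : Interlace μ κ) (hlk : Interlace lam κ)
    (h0 : κ.part 0 = max (μ.part 0) (lam.part 0))
    (ha : Interlace (downPart μ lam κ hμκ hlk) μ) (hb : Interlace (downPart μ lam κ hμκ hlk) lam) :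
    upPart μ lam (downPart μ lam κ hμκ hlk) ha hb = κ := by
  apply SeqPartition.ext'
  intro i
  cases i with
  | zero =>
    show upFun μ lam (downPart μ lam κ hμκ hlk) 0 = κ.part 0
    simp only [upFun]; omega
  | succ j =>
    have a1 := (hμκ j).2; have a2 := (hlk j).2
    have b1 := (hμκ (j + 1)).1; have b2 := (hlk (j + 1)).1
    show max (μ.part (j + 1)) (lam.part (j + 1)) +
      (min (μ.part j) (lam.part j) -
        (max (μ.part (j + 1)) (lam.part (j + 1)) +
          (min (μ.part j) (lam.part j) - κ.part (j + 1)))) = κ.part (j + 1)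
    omega

lemma unshift_shift (κ : SeqPartition) (h : (shiftPart κ).part 1 < (shiftPart κ).part 0) :
    unshiftPart (shiftPart κ) h = κ := by
  apply SeqPartition.ext'
  intro i
  cases i with
  | zero =>
    show (if (0:ℕ) = 0 then (shiftPart κ).part 0 - 1 else (shiftPart κ).part 0) = κ.part 0
    rw [if_pos rfl]
    show κ.part 0 + 1 - 1 = κ.part 0
    omega
  | succ j =>
    show (if j + 1 = 0 then (shiftPart κ).part 0 - 1 else (shiftPart κ).part (j + 1)) = κ.part (j + 1)
    rw [if_neg (by omega)]
    show (if j + 1 = 0 then κ.part 0 + 1 else κ.part (j + 1)) = κ.part (j + 1)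
    rw [if_neg (by omega)]

lemma shift_unshift (κ : SeqPartition) (h : κ.part 1 < κ.part 0) :
    shiftPart (unshiftPart κ h) = κ := by
  apply SeqPartition.ext'
  intro i
  cases i with
  | zero =>
    show (if (0:ℕ) = 0 then (unshiftPart κ h).part 0 + 1 else (unshiftPart κ h).part 0) = κ.part 0
    rw [if_pos rfl]
    show κ.part 0 - 1 + 1 = κ.part 0
    omega
  | succ j =>
    show (if j + 1 = 0 then (unshiftPart κ h).part 0 + 1 else (unshiftPart κ h).part (j + 1)) = κ.part (j + 1)
    rw [if_neg (by omega)]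
    show (if j + 1 = 0 then κ.part 0 - 1 else κ.part (j + 1)) = κ.part (j + 1)
    rw [if_neg (by omega)]

end SC

namespace SC

variable (μ lam : SeqPartition)

noncomputable def equivUp (d0 d1 : ℕ) :
    {ν : SeqPartition // Interlace ν μ ∧ Interlace ν lam ∧
      ν.size + d0 = μ.size ∧ ν.size + d1 = lam.size} ≃
    {κ : SeqPartition // (Interlace μ κ ∧ Interlace lam κ ∧
      κ.size = lam.size + d0 ∧ κ.size = μ.size + d1) ∧
      κ.part 0 = max (μ.part 0) (lam.part 0)} where
  toFun := fun x => ⟨upPart μ lam x.1 x.2.1 x.2.2.1,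
    ⟨⟨up_inter_left μ lam x.1 x.2.1 x.2.2.1, up_inter_right μ lam x.1 x.2.1 x.2.2.1,
      by
        have hs := up_size μ lam x.1 x.2.1 x.2.2.1
        have h3 := x.2.2.2.1; have h4 := x.2.2.2.2
        omega,
      by
        have hs := up_size μ lam x.1 x.2.1 x.2.2.1
        have h3 := x.2.2.2.1; have h4 := x.2.2.2.2
        omega⟩,
      by show upFun μ lam x.1 0 = _; simp only [upFun]⟩⟩
  invFun := fun x => ⟨downPart μ lam x.1 x.2.1.1 x.2.1.2.1,
    down_inter_left μ lam x.1 x.2.1.1 x.2.1.2.1,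
    down_inter_right μ lam x.1 x.2.1.1 x.2.1.2.1,
    by
      have hs := down_size μ lam x.1 x.2.1.1 x.2.1.2.1 x.2.2
      have h3 := x.2.1.2.2.1; have h4 := x.2.1.2.2.2
      omega,
    by
      have hs := down_size μ lam x.1 x.2.1.1 x.2.1.2.1 x.2.2
      have h3 := x.2.1.2.2.1; have h4 := x.2.1.2.2.2
      omega⟩
  left_inv := fun x => Subtype.ext (down_up μ lam x.1 x.2.1 x.2.2.1
    (up_inter_left μ lam x.1 x.2.1 x.2.2.1) (up_inter_right μ lam x.1 x.2.1 x.2.2.1))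
  right_inv := fun x => Subtype.ext (up_down μ lam x.1 x.2.1.1 x.2.1.2.1 x.2.2
    (down_inter_left μ lam x.1 x.2.1.1 x.2.1.2.1) (down_inter_right μ lam x.1 x.2.1.1 x.2.1.2.1))

noncomputable def equivShift (a b : ℕ) :
    {κ : SeqPartition // Interlace μ κ ∧ Interlace lam κ ∧
      κ.size = lam.size + a ∧ κ.size = μ.size + b} ≃
    {κ : SeqPartition // (Interlace μ κ ∧ Interlace lam κ ∧
      κ.size = lam.size + (a + 1) ∧ κ.size = μ.size + (b + 1)) ∧
      κ.part 0 ≠ max (μ.part 0) (lam.part 0)} where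
  toFun := fun x => ⟨shiftPart x.1,
    ⟨⟨shift_inter μ x.1 x.2.1, shift_inter lam x.1 x.2.2.1,
      by have := shift_size x.1; have := x.2.2.2.1; omega,
      by have := shift_size x.1; have := x.2.2.2.2; omega⟩,
      by
        have h0 : (shiftPart x.1).part 0 = x.1.part 0 + 1 := rfl
        have h1 := (x.2.1 0).1; have h2 := (x.2.2.1 0).1
        omega⟩⟩
  invFun := fun x =>
    have hlt : x.1.part 1 < x.1.part 0 := by
      have h1 := (x.2.1.1 0).1; have h2 := (x.2.1.2.1 0).1
      have h3 : x.1.part 1 ≤ μ.part 0 := (x.2.1.1 0).2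
      have h4 := x.2.2
      omega
    ⟨unshiftPart x.1 hlt,
    unshift_inter μ x.1 x.2.1.1 hlt (by
      have h1 := (x.2.1.1 0).1; have h2 := (x.2.1.2.1 0).1; have h4 := x.2.2; omega),
    unshift_inter lam x.1 x.2.1.2.1 hlt (by
      have h1 := (x.2.1.1 0).1; have h2 := (x.2.1.2.1 0).1; have h4 := x.2.2; omega),
    by have := unshift_size x.1 hlt; have := x.2.1.2.2.1; omega,
    by have := unshift_size x.1 hlt; have := x.2.1.2.2.2; omega⟩
  left_inv := fun x => Subtype.ext (unshift_shift x.1 (by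
    have h0 : (shiftPart x.1).part 0 = x.1.part 0 + 1 := rfl
    have h1 : (shiftPart x.1).part 1 = x.1.part 1 := rfl
    have h2 : x.1.part 1 ≤ x.1.part 0 := x.1.antitone (by omega)
    omega))
  right_inv := fun x => Subtype.ext (shift_unshift x.1 (by
    have h1 := (x.2.1.1 0).1; have h2 := (x.2.1.2.1 0).1
    have h3 : x.1.part 1 ≤ μ.part 0 := (x.2.1.1 0).2
    have h4 := x.2.2
    omega))

lemma card_eq0 (d0 d1 : ℕ) :
    Nat.card {κ : SeqPartition // (Interlace μ κ ∧ Interlace lam κ ∧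
      κ.size = lam.size + d0 ∧ κ.size = μ.size + d1) ∧
      κ.part 0 = max (μ.part 0) (lam.part 0)} =
    Nat.card {ν : SeqPartition // Interlace ν μ ∧ Interlace ν lam ∧
      ν.size + d0 = μ.size ∧ ν.size + d1 = lam.size} :=
  Nat.card_congr (equivUp μ lam d0 d1).symm

lemma card_shift (a b : ℕ) :
    Nat.card {κ : SeqPartition // (Interlace μ κ ∧ Interlace lam κ ∧
      κ.size = lam.size + (a + 1) ∧ κ.size = μ.size + (b + 1)) ∧
      κ.part 0 ≠ max (μ.part 0) (lam.part 0)} =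
    Nat.card {κ : SeqPartition // Interlace μ κ ∧ Interlace lam κ ∧
      κ.size = lam.size + a ∧ κ.size = μ.size + b} :=
  Nat.card_congr (equivShift μ lam a b).symm

lemma card_split (d0 d1 : ℕ) :
    Nat.card {κ : SeqPartition // Interlace μ κ ∧ Interlace lam κ ∧
      κ.size = lam.size + d0 ∧ κ.size = μ.size + d1} =
    Nat.card {κ : SeqPartition // (Interlace μ κ ∧ Interlace lam κ ∧
      κ.size = lam.size + d0 ∧ κ.size = μ.size + d1) ∧
      κ.part 0 = max (μ.part 0) (lam.part 0)} +
    Nat.card {κ : SeqPartition // (Interlace μ κ ∧ Interlace lam κ ∧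
      κ.size = lam.size + d0 ∧ κ.size = μ.size + d1) ∧
      κ.part 0 ≠ max (μ.part 0) (lam.part 0)} := by
  classical
  haveI h1 : Finite {κ : SeqPartition // (Interlace μ κ ∧ Interlace lam κ ∧
      κ.size = lam.size + d0 ∧ κ.size = μ.size + d1) ∧
      κ.part 0 = max (μ.part 0) (lam.part 0)} :=
    finite_of_size (lam.size + d0) (fun P hP => hP.1.2.2.1)
  haveI h2 : Finite {κ : SeqPartition // (Interlace μ κ ∧ Interlace lam κ ∧
      κ.size = lam.size + d0 ∧ κ.size = μ.size + d1) ∧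
      κ.part 0 ≠ max (μ.part 0) (lam.part 0)} :=
    finite_of_size (lam.size + d0) (fun P hP => hP.1.2.2.1)
  have e : {κ : SeqPartition // Interlace μ κ ∧ Interlace lam κ ∧
      κ.size = lam.size + d0 ∧ κ.size = μ.size + d1} ≃
      {κ : SeqPartition // (Interlace μ κ ∧ Interlace lam κ ∧
        κ.size = lam.size + d0 ∧ κ.size = μ.size + d1) ∧
        κ.part 0 = max (μ.part 0) (lam.part 0)} ⊕
      {κ : SeqPartition // (Interlace μ κ ∧ Interlace lam κ ∧
        κ.size = lam.size + d0 ∧ κ.size = μ.size + d1) ∧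
        κ.part 0 ≠ max (μ.part 0) (lam.part 0)} :=
    (Equiv.sumCompl (fun x : {κ : SeqPartition // Interlace μ κ ∧ Interlace lam κ ∧
        κ.size = lam.size + d0 ∧ κ.size = μ.size + d1} =>
      x.1.part 0 = max (μ.part 0) (lam.part 0))).symm.trans
      (Equiv.sumCongr
        (Equiv.subtypeSubtypeEquivSubtypeInter
          (fun κ : SeqPartition => Interlace μ κ ∧ Interlace lam κ ∧
            κ.size = lam.size + d0 ∧ κ.size = μ.size + d1)
          (fun κ : SeqPartition => κ.part 0 = max (μ.part 0) (lam.part 0)))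
        (Equiv.subtypeSubtypeEquivSubtypeInter
          (fun κ : SeqPartition => Interlace μ κ ∧ Interlace lam κ ∧
            κ.size = lam.size + d0 ∧ κ.size = μ.size + d1)
          (fun κ : SeqPartition => ¬ κ.part 0 = max (μ.part 0) (lam.part 0))))
  have := Nat.card_congr e
  rw [Nat.card_sum] at this
  exact this

lemma card_empty_left (d1 : ℕ) :
    Nat.card {κ : SeqPartition // (Interlace μ κ ∧ Interlace lam κ ∧
      κ.size = lam.size + 0 ∧ κ.size = μ.size + d1) ∧
      κ.part 0 ≠ max (μ.part 0) (lam.part 0)} = 0 := by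
  rw [Nat.card_eq_zero]
  left
  constructor
  rintro ⟨κ, ⟨hμκ, hlk, hs1, hs2⟩, hne⟩
  obtain ⟨N2, hk⟩ := κ.eventually_zero
  obtain ⟨N1, hl⟩ := lam.eventually_zero
  have hlt : lam.size < κ.size := by
    calc lam.size = ∑ i ∈ Finset.range (N1 + N2 + 1), lam.part i :=
          size_eq_sum lam (fun i hi => hl i (by omega))
      _ < ∑ i ∈ Finset.range (N1 + N2 + 1), κ.part i := by
          refine Finset.sum_lt_sum (fun i _ => (hlk i).1)
            ⟨0, Finset.mem_range.mpr (by omega), ?_⟩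
          have h1 := (hμκ 0).1; have h2 := (hlk 0).1
          omega
      _ = κ.size := (size_eq_sum κ (fun i hi => hk i (by omega))).symm
  omega

lemma card_empty_right (d0 : ℕ) :
    Nat.card {κ : SeqPartition // (Interlace μ κ ∧ Interlace lam κ ∧
      κ.size = lam.size + d0 ∧ κ.size = μ.size + 0) ∧
      κ.part 0 ≠ max (μ.part 0) (lam.part 0)} = 0 := by
  rw [Nat.card_eq_zero]
  left
  constructor
  rintro ⟨κ, ⟨hμκ, hlk, hs1, hs2⟩, hne⟩
  obtain ⟨N2, hk⟩ := κ.eventually_zero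
  obtain ⟨N1, hl⟩ := μ.eventually_zero
  have hlt : μ.size < κ.size := by
    calc μ.size = ∑ i ∈ Finset.range (N1 + N2 + 1), μ.part i :=
          size_eq_sum μ (fun i hi => hl i (by omega))
      _ < ∑ i ∈ Finset.range (N1 + N2 + 1), κ.part i := by
          refine Finset.sum_lt_sum (fun i _ => (hμκ i).1)
            ⟨0, Finset.mem_range.mpr (by omega), ?_⟩
          have h1 := (hμκ 0).1; have h2 := (hlk 0).1
          omega
      _ = κ.size := (size_eq_sum κ (fun i hi => hk i (by omega))).symm
  omega

end SC


/-- Skew Cauchy identity for horizontal strips: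
∑_{ν ⪯ μ, ν ⪯ λ} x^{|μ|-|ν|} y^{|λ|-|ν|}
  = (1 - xy) · ∑_{κ ⪰ μ, κ ⪰ λ} x^{|κ|-|λ|} y^{|κ|-|μ|}. -/
theorem skew_cauchy_horizontal_strips (μ lam : SeqPartition) :
    skewCauchyLHS μ lam =
      (1 - (MvPowerSeries.X 0 : MvPowerSeries (Fin 2) ℚ) * MvPowerSeries.X 1) *
        skewCauchyRHS μ lam := by
  classical
  apply MvPowerSeries.ext
  intro d
  rw [sub_mul, one_mul, map_sub]
  have hXX : ((MvPowerSeries.X 0 : MvPowerSeries (Fin 2) ℚ) * MvPowerSeries.X 1) =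
      MvPowerSeries.monomial (Finsupp.single (0 : Fin 2) 1 + Finsupp.single 1 1) (1 : ℚ) := by
    rw [MvPowerSeries.X_def, MvPowerSeries.X_def, MvPowerSeries.monomial_mul_monomial, one_mul]
  rw [hXX, MvPowerSeries.coeff_monomial_mul]
  set e : Fin 2 →₀ ℕ := Finsupp.single 0 1 + Finsupp.single 1 1 with he
  have he0 : e 0 = 1 := by simp [he, Finsupp.single_apply]
  have he1 : e 1 = 1 := by simp [he, Finsupp.single_apply]
  simp only [MvPowerSeries.coeff_apply, skewCauchyLHS, skewCauchyRHS]
  have hiff : e ≤ d ↔ 1 ≤ d 0 ∧ 1 ≤ d 1 := by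
    constructor
    · intro h
      exact ⟨by have := Finsupp.le_def.mp h 0; omega,
             by have := Finsupp.le_def.mp h 1; omega⟩
    · rintro ⟨h1, h2⟩
      rw [Finsupp.le_def]
      intro s
      have hs : s = 0 ∨ s = 1 := by
        rcases s with ⟨v, hv⟩
        interval_cases v
        · left; rfl
        · right; rfl
      rcases hs with rfl | rfl
      · rw [he0]; exact h1
      · rw [he1]; exact h2
  by_cases hle : e ≤ d
  · rw [if_pos hle, one_mul]
    obtain ⟨hd0, hd1⟩ := hiff.mp hle
    have hsub0 : (d - e) 0 = d 0 - 1 := by rw [Finsupp.tsub_apply, he0]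
    have hsub1 : (d - e) 1 = d 1 - 1 := by rw [Finsupp.tsub_apply, he1]
    obtain ⟨a, ha⟩ : ∃ a, d 0 = a + 1 := ⟨d 0 - 1, by omega⟩
    obtain ⟨b, hb⟩ : ∃ b, d 1 = b + 1 := ⟨d 1 - 1, by omega⟩
    rw [hsub0, hsub1, ha, hb]
    simp only [Nat.add_sub_cancel]
    rw [SC.card_split μ lam (a + 1) (b + 1), SC.card_eq0 μ lam (a + 1) (b + 1),
        SC.card_shift μ lam a b]
    push_cast
    ring
  · rw [if_neg hle, sub_zero]
    have hor : d 0 = 0 ∨ d 1 = 0 := by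
      by_contra hcon
      push_neg at hcon
      exact hle (hiff.mpr ⟨by omega, by omega⟩)
    rcases hor with h0 | h0
    · rw [h0, SC.card_split μ lam 0 (d 1), SC.card_eq0 μ lam 0 (d 1),
          SC.card_empty_left μ lam (d 1)]
      push_cast
      ring
    · rw [h0, SC.card_split μ lam (d 0) 0, SC.card_eq0 μ lam (d 0) 0,
          SC.card_empty_right μ lam (d 0)]
      push_cast
      ring
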